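/- arXiv:1312.0048 — 5 statements merged into one kernel-verified Lean document; each statement's English description precedes it below -/
import Mathlib

section
/- Let X_1, …, X_n be a martingale difference sequence with respect to a filtration F = (F_i)_{0 ≤ i ≤ n}, with |X_i| ≤ K almost surely for all i. Let S_i = X_1 + ⋯ + X_i and let Σ_n² = Σ_{t=1}^n E[X_t² | F_{t−1}] be the sum of conditional variances. Then for all constants s > 0 and ν > 0, P( max_{i=1,…,n} S_i > s and Σ_n² ≤ ν ) ≤ exp( − s² / (2(ν + K s / 3)) ). -/
/-!
For `0 ≤ l` with `l K < 3`, the series bound `eˣ ≤ 1 + x + x² / (2 (1 - l K / 3))` on `|x| ≤ l K`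
and `E[X_i | ℱ_{i-1}] = 0` give `E[e^{l X_i} | ℱ_{i-1}] ≤ exp (c E[X_i² | ℱ_{i-1}])` with
`c = l² / (2 (1 - l K / 3))`. Hence `M_i = exp (l S_i - c Σ_i²)` is a positive supermartingale with
`M_0 = 1`. On the event in question `M_i ≥ exp (l s - c ν)` for some `i ≤ n`, because `Σ_i²` is
nondecreasing in `i`; optional stopping at the first such time bounds its probability by
`exp (c ν - l s)`, and `l = s / (ν + K s / 3)` turns this into `exp (-s² / (2 (ν + K s / 3)))`.
-/

open MeasureTheory Finset
open scoped Nat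

theorem Real.exp_le_one_add_add_sq_div_of_abs_le {x b : ℝ} (hx : |x| ≤ b) (hb : b < 3) :
    Real.exp x ≤ 1 + x + x ^ 2 / (2 * (1 - b / 3)) := by
  have hx3 : |x| / 3 < 1 := by linarith [abs_nonneg x]
  have htail : HasSum (fun k : ℕ => x ^ (k + 2) / (k + 2)!) (Real.exp x - 1 - x) := by
    have h := (hasSum_nat_add_iff' 2).mpr (NormedSpace.expSeries_div_hasSum_exp x)
    rw [← Real.exp_eq_exp_ℝ] at h
    simpa [Finset.sum_range_succ, sub_sub] using h
  have hgeom : HasSum (fun k : ℕ => x ^ 2 / 2 * (|x| / 3) ^ k) (x ^ 2 / 2 * (1 - |x| / 3)⁻¹) :=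
    (hasSum_geometric_of_lt_one (by positivity) hx3).mul_left _
  have hterm (k : ℕ) : x ^ (k + 2) / (k + 2)! ≤ x ^ 2 / 2 * (|x| / 3) ^ k := by
    have hfac : (2 * 3 ^ k : ℝ) ≤ (k + 2)! := by
      rw [add_comm k]; exact_mod_cast Nat.factorial_mul_pow_le_factorial (m := 2)
    calc x ^ (k + 2) / (k + 2)! ≤ |x| ^ (k + 2) / (k + 2)! :=
          div_le_div_of_nonneg_right ((le_abs_self _).trans (abs_pow x _).le) (by positivity)
      _ ≤ |x| ^ (k + 2) / (2 * 3 ^ k) := by gcongr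
      _ = x ^ 2 / 2 * (|x| / 3) ^ k := by rw [pow_add, ← sq_abs x, div_pow]; field_simp
  have hratio : x ^ 2 / 2 * (1 - |x| / 3)⁻¹ ≤ x ^ 2 / (2 * (1 - b / 3)) := by
    rw [← div_eq_mul_inv, div_div]
    gcongr
    linarith
  linarith [hasSum_le hterm htail hgeom]

section

variable {Ω : Type*} {m0 : MeasurableSpace Ω} {μ : Measure Ω}

theorem condExp_exp_mul_le_exp_mul_condExp_sq {m : MeasurableSpace Ω} (hm : m ≤ m0)
    [IsFiniteMeasure μ] {Z : Ω → ℝ} {K l : ℝ} (hZ : AEStronglyMeasurable[m0] Z μ)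
    (hbdd : ∀ᵐ ω ∂μ, |Z ω| ≤ K) (hmean : μ[Z | m] =ᵐ[μ] 0) (hl : 0 ≤ l) (hlK : l * K < 3) :
    μ[fun ω => Real.exp (l * Z ω) | m] ≤ᵐ[μ]
      fun ω => Real.exp (l ^ 2 / (2 * (1 - l * K / 3)) * μ[fun ω => Z ω ^ 2 | m] ω) := by
  set c := l ^ 2 / (2 * (1 - l * K / 3))
  have hZint : Integrable Z μ := .of_bound hZ K (by simpa using hbdd)
  have hZ2int : Integrable (fun ω => Z ω ^ 2) μ := by
    refine .of_bound (hZ.pow 2) (K ^ 2) ?_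
    filter_upwards [hbdd] with ω hω
    simpa [sq_abs] using pow_le_pow_left₀ (abs_nonneg _) hω 2
  have hexpint : Integrable (fun ω => Real.exp (l * Z ω)) μ :=
    ProbabilityTheory.integrable_exp_mul_of_le l K hl hZ.aemeasurable
      (hbdd.mono fun _ hω => (le_abs_self _).trans hω)
  have hpoint : (fun ω => Real.exp (l * Z ω)) ≤ᵐ[μ] fun ω => 1 + l * Z ω + c * Z ω ^ 2 := by
    filter_upwards [hbdd] with ω hω
    have hlZ : |l * Z ω| ≤ l * K := by
      rw [abs_mul, abs_of_nonneg hl]; exact mul_le_mul_of_nonneg_left hω hl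
    convert Real.exp_le_one_add_add_sq_div_of_abs_le hlZ hlK using 1
    ring
  have hquad : (fun ω => 1 + l * Z ω + c * Z ω ^ 2)
      = (fun _ => (1 : ℝ)) + (l • Z + c • fun ω => Z ω ^ 2) := by
    ext ω; simp only [Pi.add_apply, Pi.smul_apply, smul_eq_mul]; ring
  have hcond : μ[fun ω => 1 + l * Z ω + c * Z ω ^ 2 | m]
      =ᵐ[μ] fun ω => 1 + c * μ[fun ω => Z ω ^ 2 | m] ω := by
    rw [hquad]
    filter_upwards [condExp_add (integrable_const 1) ((hZint.smul l).add (hZ2int.smul c)) m,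
      condExp_add (hZint.smul l) (hZ2int.smul c) m, condExp_smul l Z m,
      condExp_smul c (fun ω => Z ω ^ 2) m, hmean] with ω h1 h2 h3 h4 h5
    simp [h1, h2, h3, h4, h5, condExp_const hm]
  filter_upwards [condExp_mono hexpint (by rw [hquad]; fun_prop) hpoint, hcond] with ω h1 h2
  rw [h2] at h1
  linarith [Real.add_one_le_exp (c * μ[fun ω => Z ω ^ 2 | m] ω)]

variable {ℱ : Filtration ℕ m0}

theorem MeasureTheory.Supermartingale.maximal_ineq [IsFiniteMeasure μ] {M : ℕ → Ω → ℝ}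
    (hM : Supermartingale M ℱ μ) (hnonneg : 0 ≤ M) (a : ℝ) (n : ℕ) :
    a * μ.real {ω | a ≤ (range (n + 1)).sup' nonempty_range_add_one fun k => M k ω} ≤
      ∫ ω, M 0 ω ∂μ := by
  set E := {ω | a ≤ (range (n + 1)).sup' nonempty_range_add_one fun k => M k ω}
  set τ : Ω → ℕ∞ := fun ω => (hittingBtwn M (Set.Ici a) 0 n ω : ℕ)
  have hτ : IsStoppingTime ℱ τ :=
    hM.stronglyAdapted.adapted.isStoppingTime_hittingBtwn measurableSet_Ici
  have hτn (ω : Ω) : τ ω ≤ n := WithTop.coe_le_coe.mpr (hittingBtwn_le ω)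
  have hE : MeasurableSet E := measurableSet_le measurable_const
    (Finset.measurable_range_sup'' fun k _ => (hM.stronglyAdapted k).measurable.le (ℱ.le k))
  have hint : Integrable (stoppedValue M τ) μ := integrable_stoppedValue ℕ hτ hM.integrable hτn
  have hstop (ω : Ω) (hω : ω ∈ E) : a ≤ stoppedValue M τ ω := by
    obtain ⟨k, hk, hak⟩ := (le_sup'_iff _).mp (Set.mem_ofPred.mp hω)
    exact stoppedValue_hittingBtwn_mem ⟨k, ⟨k.zero_le, mem_range_succ_iff.mp hk⟩, hak⟩
  have hopt : ∫ ω, stoppedValue M τ ω ∂μ ≤ ∫ ω, M 0 ω ∂μ := by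
    have := hM.neg.expected_stoppedValue_mono (isStoppingTime_const ℱ 0) hτ
      (fun _ => zero_le) hτn
    simpa [stoppedValue, integral_neg] using this
  calc a * μ.real E ≤ ∫ ω in E, stoppedValue M τ ω ∂μ :=
        setIntegral_ge_of_const_le_real hE (measure_ne_top μ E) hstop hint.integrableOn
    _ ≤ ∫ ω, stoppedValue M τ ω ∂μ :=
        setIntegral_le_integral hint (ae_of_all _ fun ω => hnonneg _ _)
    _ ≤ ∫ ω, M 0 ω ∂μ := hopt

theorem MeasureTheory.Supermartingale.measure_le_sup_le [IsFiniteMeasure μ] {M : ℕ → Ω → ℝ}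
    (hM : Supermartingale M ℱ μ) (hnonneg : 0 ≤ M) {a : ℝ} (ha : 0 < a) (n : ℕ) :
    μ {ω | a ≤ (range (n + 1)).sup' nonempty_range_add_one fun k => M k ω} ≤
      ENNReal.ofReal ((∫ ω, M 0 ω ∂μ) / a) := by
  rw [← ofReal_measureReal]
  exact ENNReal.ofReal_le_ofReal ((le_div_iff₀' ha).mpr (hM.maximal_ineq hnonneg a n))

def partialSum (X : ℕ → Ω → ℝ) (i : ℕ) (ω : Ω) : ℝ := ∑ j ∈ Icc 1 i, X j ω

noncomputable def condVarSum (μ : Measure Ω) (ℱ : Filtration ℕ m0) (X : ℕ → Ω → ℝ) (i : ℕ)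
    (ω : Ω) : ℝ :=
  ∑ t ∈ Icc 1 i, μ[fun ω' => X t ω' ^ 2 | ℱ (t - 1)] ω

noncomputable def bernsteinProcess (μ : Measure Ω) (ℱ : Filtration ℕ m0) (X : ℕ → Ω → ℝ)
    (l c : ℝ) (i : ℕ) (ω : Ω) : ℝ :=
  Real.exp (l * partialSum X i ω - c * condVarSum μ ℱ X i ω)

variable {X : ℕ → Ω → ℝ}

theorem bernsteinProcess_pos (l c : ℝ) (i : ℕ) (ω : Ω) : 0 < bernsteinProcess μ ℱ X l c i ω :=
  Real.exp_pos _

theorem partialSum_succ (X : ℕ → Ω → ℝ) (i : ℕ) :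
    partialSum X (i + 1) = partialSum X i + X (i + 1) := by
  ext ω; exact sum_Icc_succ_top (Nat.le_add_left 1 i) _

theorem condVarSum_succ (μ : Measure Ω) (ℱ : Filtration ℕ m0) (X : ℕ → Ω → ℝ) (i : ℕ) :
    condVarSum μ ℱ X (i + 1) = condVarSum μ ℱ X i + μ[fun ω => X (i + 1) ω ^ 2 | ℱ i] := by
  ext ω; exact sum_Icc_succ_top (Nat.le_add_left 1 i) _

theorem stronglyAdapted_partialSum (hX : StronglyAdapted ℱ X) : StronglyAdapted ℱ (partialSum X) :=
  fun _ => Finset.stronglyMeasurable_fun_sum _ fun j hj => (hX j).mono (ℱ.mono (mem_Icc.mp hj).2)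

theorem stronglyAdapted_condVarSum : StronglyAdapted ℱ (condVarSum μ ℱ X) :=
  fun _ => Finset.stronglyMeasurable_fun_sum _ fun t ht =>
    stronglyMeasurable_condExp.mono (ℱ.mono ((Nat.sub_le t 1).trans (mem_Icc.mp ht).2))

variable (μ ℱ X) in
theorem ae_monotone_condVarSum : ∀ᵐ ω ∂μ, Monotone fun i => condVarSum μ ℱ X i ω := by
  have hnonneg : ∀ᵐ ω ∂μ, ∀ t, 0 ≤ μ[fun ω' => X t ω' ^ 2 | ℱ (t - 1)] ω :=
    ae_all_iff.mpr fun t => condExp_nonneg (ae_of_all _ fun ω => sq_nonneg _)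
  filter_upwards [hnonneg] with ω hω
  exact monotone_nat_of_le_succ fun i => by
    rw [condVarSum_succ, Pi.add_apply]; exact le_add_of_nonneg_right (by simpa using hω (i + 1))

theorem stronglyAdapted_bernsteinProcess (hX : StronglyAdapted ℱ X) (l c : ℝ) :
    StronglyAdapted ℱ (bernsteinProcess μ ℱ X l c) := fun i =>
  Real.continuous_exp.comp_stronglyMeasurable
    (((stronglyAdapted_partialSum hX i).const_mul l).sub
      ((stronglyAdapted_condVarSum i).const_mul c))

theorem integrable_bernsteinProcess [IsFiniteMeasure μ] {K l c : ℝ} (hX : StronglyAdapted ℱ X)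
    (hbdd : ∀ i, ∀ᵐ ω ∂μ, |X i ω| ≤ K) (hl : 0 ≤ l) (hc : 0 ≤ c) (i : ℕ) :
    Integrable (bernsteinProcess μ ℱ X l c i) μ := by
  refine .of_bound ((stronglyAdapted_bernsteinProcess hX l c i).mono (ℱ.le i)).aestronglyMeasurable
    (Real.exp (l * (i * K))) ?_
  filter_upwards [ae_all_iff.mpr hbdd, ae_monotone_condVarSum μ ℱ X] with ω hω hmono
  have hS : partialSum X i ω ≤ i * K := by
    simpa [partialSum] using Finset.sum_le_sum fun j (_ : j ∈ Icc 1 i) => (abs_le.mp (hω j)).2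
  have hV : 0 ≤ condVarSum μ ℱ X i ω := by simpa [condVarSum] using hmono (Nat.zero_le i)
  rw [Real.norm_of_nonneg (bernsteinProcess_pos l c i ω).le]
  exact Real.exp_le_exp.mpr (by nlinarith [mul_le_mul_of_nonneg_left hS hl])

theorem supermartingale_bernsteinProcess [IsFiniteMeasure μ] {K l : ℝ}
    (hX : StronglyAdapted ℱ X) (hmean : ∀ i, μ[X (i + 1) | ℱ i] =ᵐ[μ] 0)
    (hbdd : ∀ i, ∀ᵐ ω ∂μ, |X i ω| ≤ K) (hl : 0 ≤ l) (hlK : l * K < 3) :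
    Supermartingale (bernsteinProcess μ ℱ X l (l ^ 2 / (2 * (1 - l * K / 3)))) ℱ μ := by
  set c := l ^ 2 / (2 * (1 - l * K / 3))
  set M := bernsteinProcess μ ℱ X l c
  have hadp : StronglyAdapted ℱ M := stronglyAdapted_bernsteinProcess hX l c
  have hint : ∀ i, Integrable (M i) μ :=
    integrable_bernsteinProcess hX hbdd hl (div_nonneg (sq_nonneg l) (by linarith))
  refine supermartingale_nat hadp hint fun i => ?_
  set g := μ[fun ω => X (i + 1) ω ^ 2 | ℱ i]
  set A : Ω → ℝ := fun ω => M i ω * Real.exp (-(c * g ω))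
  have hA : StronglyMeasurable[ℱ i] A := (hadp i).mul
    (Real.continuous_exp.comp_stronglyMeasurable (stronglyMeasurable_condExp.const_mul c).neg)
  have hsplit : M (i + 1) = A * fun ω => Real.exp (l * X (i + 1) ω) := by
    ext ω
    simp only [M, A, g, bernsteinProcess, partialSum_succ, condVarSum_succ, Pi.add_apply,
      Pi.mul_apply, ← Real.exp_add]
    ring_nf
  have hXint : AEStronglyMeasurable[m0] (X (i + 1)) μ :=
    ((hX (i + 1)).mono (ℱ.le (i + 1))).aestronglyMeasurable
  have hexpint : Integrable (fun ω => Real.exp (l * X (i + 1) ω)) μ :=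
    ProbabilityTheory.integrable_exp_mul_of_le l K hl hXint.aemeasurable
      ((hbdd (i + 1)).mono fun _ hω => (le_abs_self _).trans hω)
  have hpull := condExp_mul_of_stronglyMeasurable_left hA (hsplit ▸ hint (i + 1)) hexpint
  filter_upwards [hpull, condExp_exp_mul_le_exp_mul_condExp_sq (ℱ.le i) hXint (hbdd (i + 1))
    (hmean i) hl hlK] with ω h1 h2
  rw [hsplit, h1, Pi.mul_apply]
  calc A ω * μ[fun ω => Real.exp (l * X (i + 1) ω) | ℱ i] ω
      ≤ A ω * Real.exp (c * g ω) :=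
        mul_le_mul_of_nonneg_left h2 (mul_pos (bernsteinProcess_pos l c i ω) (Real.exp_pos _)).le
    _ = M i ω := by
        simp only [A, mul_assoc, ← Real.exp_add, neg_add_cancel, Real.exp_zero, mul_one]

theorem bernsteinProcess_zero (l c : ℝ) : bernsteinProcess μ ℱ X l c 0 = 1 := by
  ext; simp [bernsteinProcess, partialSum, condVarSum]

theorem ae_le_sup_bernsteinProcess_of_lt_sup_partialSum {n : ℕ} (hn : (Icc 1 n).Nonempty)
    {l c s ν : ℝ} (hl : 0 ≤ l) (hc : 0 ≤ c) :
    {ω | s < (Icc 1 n).sup' hn (fun i => partialSum X i ω) ∧ condVarSum μ ℱ X n ω ≤ ν} ≤ᵐ[μ]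
      {ω | Real.exp (l * s - c * ν) ≤
        (range (n + 1)).sup' nonempty_range_add_one fun k => bernsteinProcess μ ℱ X l c k ω} := by
  filter_upwards [ae_monotone_condVarSum μ ℱ X] with ω hmono ⟨hsup, hV⟩
  obtain ⟨i, hi, hSi⟩ := (lt_sup'_iff _).mp hsup
  have hin := (mem_Icc.mp hi).2
  have hexp : l * s - c * ν ≤ l * partialSum X i ω - c * condVarSum μ ℱ X i ω :=
    sub_le_sub (mul_le_mul_of_nonneg_left hSi.le hl)
      (mul_le_mul_of_nonneg_left ((hmono hin).trans hV) hc)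
  exact (Real.exp_le_exp.mpr hexp).trans
    (le_sup' (fun k => bernsteinProcess μ ℱ X l c k ω) (mem_range.mpr (Nat.lt_succ_of_le hin)))

theorem partialSum_congr {Y : ℕ → Ω → ℝ} {i : ℕ} (h : ∀ j ∈ Icc 1 i, X j = Y j) :
    partialSum X i = partialSum Y i := by
  ext ω; exact sum_congr rfl fun j hj => congrFun (h j hj) ω

theorem condVarSum_congr {Y : ℕ → Ω → ℝ} {i : ℕ} (h : ∀ j ∈ Icc 1 i, X j = Y j) :
    condVarSum μ ℱ X i = condVarSum μ ℱ Y i := by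
  ext ω; exact sum_congr rfl fun j hj => by rw [h j hj]

theorem bernsteinProcess_congr {Y : ℕ → Ω → ℝ} {i : ℕ} (h : ∀ j ∈ Icc 1 i, X j = Y j)
    (l c : ℝ) : bernsteinProcess μ ℱ X l c i = bernsteinProcess μ ℱ Y l c i := by
  ext ω; simp only [bernsteinProcess, partialSum_congr h, condVarSum_congr h]

theorem stronglyAdapted_piecewise_zero {s : Finset ℕ}
    (hX : ∀ i ∈ s, StronglyMeasurable[ℱ i] (X i)) : StronglyAdapted ℱ (s.piecewise X 0) := by
  intro i
  by_cases hi : i ∈ s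
  · simpa [hi] using hX i hi
  · rw [piecewise_eq_of_notMem _ _ _ hi]; exact stronglyMeasurable_const

theorem ae_abs_piecewise_zero_le {s : Finset ℕ} {K : ℝ} (hK : 0 ≤ K)
    (hX : ∀ i ∈ s, ∀ᵐ ω ∂μ, |X i ω| ≤ K) (i : ℕ) : ∀ᵐ ω ∂μ, |s.piecewise X 0 i ω| ≤ K := by
  by_cases hi : i ∈ s
  · simpa [hi] using hX i hi
  · exact ae_of_all _ fun ω => by simpa [hi] using hK

theorem condExp_piecewise_Icc_succ_ae_eq_zero {n : ℕ}
    (hX : ∀ i ∈ Icc 1 n, μ[X i | ℱ (i - 1)] =ᵐ[μ] 0) (i : ℕ) :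
    μ[(Icc 1 n).piecewise X 0 (i + 1) | ℱ i] =ᵐ[μ] 0 := by
  by_cases hi : i + 1 ∈ Icc 1 n
  · simpa [hi] using hX (i + 1) hi
  · simp [hi]

end

/-- Bernstein's inequality for martingales (first form): for a martingale
difference sequence `X_1, …, X_n` w.r.t. the filtration `ℱ` with `|X_i| ≤ K` a.s.,
writing `S_i = X_1 + ⋯ + X_i` and `Σ_n² = ∑_{t=1}^n E[X_t² | ℱ_{t−1}]`,
`P(max_{1≤i≤n} S_i > s ∧ Σ_n² ≤ ν) ≤ exp(−s²/(2(ν + Ks/3)))`. -/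
theorem bernstein_martingale {Ω : Type*} [m0 : MeasurableSpace Ω]
    (μ : Measure Ω) [IsProbabilityMeasure μ]
    (n : ℕ) (hn : 1 ≤ n) (ℱ : Filtration ℕ m0)
    (X : ℕ → Ω → ℝ) (K : ℝ) (hK : 0 < K)
    (hadp : ∀ i ∈ Icc 1 n, StronglyMeasurable[ℱ i] (X i))
    (hmd : ∀ i ∈ Icc 1 n, μ[X i | ℱ (i - 1)] =ᵐ[μ] 0)
    (hbdd : ∀ i ∈ Icc 1 n, ∀ᵐ ω ∂μ, |X i ω| ≤ K)
    (s ν : ℝ) (hs : 0 < s) (hν : 0 < ν) :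
    μ {ω | ((Icc 1 n).sup' (Finset.nonempty_Icc.mpr hn)
          fun i => ∑ j ∈ Icc 1 i, X j ω) > s ∧
        (∑ t ∈ Icc 1 n, (μ[(fun ω' => (X t ω') ^ 2) | ℱ (t - 1)]) ω) ≤ ν} ≤
      ENNReal.ofReal (Real.exp (-s ^ 2 / (2 * (ν + K * s / 3)))) := by
  have hd : 0 < ν + K * s / 3 := by positivity
  set l := s / (ν + K * s / 3)
  set c := l ^ 2 / (2 * (1 - l * K / 3))
  have hlK : l * K < 3 := by rw [div_mul_eq_mul_div, div_lt_iff₀ hd]; nlinarith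
  have hexponent : l * s - c * ν = s ^ 2 / (2 * (ν + K * s / 3)) := by
    simp only [c, l]; field_simp; ring
  have hc : 0 ≤ c := div_nonneg (sq_nonneg l) (by linarith)
  set Y := (Icc 1 n).piecewise X 0
  have hXY (k : ℕ) (hk : k ∈ range (n + 1)) (j : ℕ) (hj : j ∈ Icc 1 k) : X j = Y j :=
    (piecewise_eq_of_mem _ _ _ (Icc_subset_Icc_right (mem_range_succ_iff.mp hk) hj)).symm
  have hM := supermartingale_bernsteinProcess (stronglyAdapted_piecewise_zero hadp)
    (condExp_piecewise_Icc_succ_ae_eq_zero hmd) (ae_abs_piecewise_zero_le hK.le hbdd)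
    (by positivity) hlK
  calc _ ≤ μ {ω | Real.exp (l * s - c * ν) ≤
        (range (n + 1)).sup' nonempty_range_add_one fun k => bernsteinProcess μ ℱ X l c k ω} :=
        measure_mono_ae (ae_le_sup_bernsteinProcess_of_lt_sup_partialSum _ (by positivity) hc)
    _ = μ {ω | Real.exp (l * s - c * ν) ≤
        (range (n + 1)).sup' nonempty_range_add_one fun k => bernsteinProcess μ ℱ Y l c k ω} := by
        congr! 4 with ω
        exact sup'_congr _ rfl fun k hk => congrFun (bernsteinProcess_congr (hXY k hk) l c) ω
    _ ≤ _ := hM.measure_le_sup_le (fun _ _ => (bernsteinProcess_pos _ _ _ _).le)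
        (Real.exp_pos _) n
    _ = _ := by rw [bernsteinProcess_zero]; simp [hexponent, ← Real.exp_neg, neg_div]
end

section
/- If φ : ℝ → ℝ is nonnegative and differentiable with γ-Lipschitz derivative, i.e. φ(z) ≥ 0 and |φ'(z) − φ'(z')| ≤ γ|z − z'| for all z, z', then for every z ∈ ℝ, φ'(z)² ≤ 4γ φ(z). -/
/-- If `φ : ℝ → ℝ` is nonnegative and differentiable with γ-Lipschitz
derivative, then `φ'(z)² ≤ 4γ φ(z)` for every `z`. -/
theorem smooth_nonneg_self_bounding (φ φ' : ℝ → ℝ) (γ : ℝ) (hγ : 0 < γ)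
    (hderiv : ∀ z, HasDerivAt φ (φ' z) z)
    (hnonneg : ∀ z, 0 ≤ φ z)
    (hlip : ∀ z z', |φ' z - φ' z'| ≤ γ * |z - z'|) :
    ∀ z, (φ' z) ^ 2 ≤ 4 * γ * φ z := by
  have key : ∀ a b : ℝ, φ b ≤ φ a + φ' a * (b - a) + γ * (b - a) ^ 2 := by
    intro a b
    rcases lt_trichotomy a b with hab | hab | hab
    · obtain ⟨c, hc, hc'⟩ := exists_hasDerivAt_eq_slope φ φ' hab
        (fun x _ => (hderiv x).continuousAt.continuousWithinAt)
        (fun x _ => hderiv x)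
      have hba : b - a ≠ 0 := sub_ne_zero.mpr (ne_of_gt hab)
      have h1 := abs_le.mp (hlip c a)
      have hca : |c - a| ≤ b - a := by
        rw [abs_of_pos (by linarith [hc.1] : (0:ℝ) < c - a)]; linarith [hc.2]
      have h2 : φ b - φ a = φ' c * (b - a) := by
        field_simp [hba] at hc'; linarith
      have hd : φ' c - φ' a ≤ γ * (b - a) := by
        calc φ' c - φ' a ≤ γ * |c - a| := h1.2
          _ ≤ γ * (b - a) := by nlinarith
      have := mul_le_mul_of_nonneg_right hd (by linarith : (0:ℝ) ≤ b - a)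
      nlinarith [this]
    · subst hab; nlinarith
    · obtain ⟨c, hc, hc'⟩ := exists_hasDerivAt_eq_slope φ φ' hab
        (fun x _ => (hderiv x).continuousAt.continuousWithinAt)
        (fun x _ => hderiv x)
      have hba : a - b ≠ 0 := sub_ne_zero.mpr (ne_of_gt hab)
      have h1 := abs_le.mp (hlip c a)
      have hca : |c - a| ≤ a - b := by
        rw [abs_of_neg (by linarith [hc.2] : c - a < 0)]; linarith [hc.1]
      have h2 : φ a - φ b = φ' c * (a - b) := by
        field_simp [hba] at hc'; linarith
      have hd : φ' a - φ' c ≤ γ * (a - b) := by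
        have := h1.1
        have : -(γ * (a - b)) ≤ φ' c - φ' a := le_trans (by nlinarith) this
        linarith
      have := mul_le_mul_of_nonneg_right hd (by linarith : (0:ℝ) ≤ a - b)
      nlinarith [this]
  intro z
  have h := key z (z - φ' z / (2 * γ))
  have hz := hnonneg (z - φ' z / (2 * γ))
  have e1 : φ' z * (z - φ' z / (2 * γ) - z) = -(φ' z ^ 2) / (2 * γ) := by
    field_simp; ring
  have e2 : γ * (z - φ' z / (2 * γ) - z) ^ 2 = φ' z ^ 2 / (4 * γ) := by
    field_simp; ring
  rw [e1, e2] at h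
  have h3 : 0 ≤ φ z - (φ' z ^ 2) / (4 * γ) := by
    have : -(φ' z ^ 2) / (2 * γ) = -2 * (φ' z ^ 2 / (4 * γ)) := by ring
    rw [this] at h
    linarith
  have h4 : φ' z ^ 2 / (4 * γ) ≤ φ z := by linarith
  calc φ' z ^ 2 = 4 * γ * (φ' z ^ 2 / (4 * γ)) := by field_simp
    _ ≤ 4 * γ * φ z := by nlinarith
end

section
/- Let f : ℝ^d → ℝ be convex and differentiable, Ω ⊆ ℝ^d a nonempty closed convex set, and η > 0. For any w_t ∈ Ω and any w_* ∈ Ω, the projected gradient step w_{t+1} = π_Ω(w_t − η ∇f(w_t)) satisfies f(w_t) − f(w_*) ≤ (‖w_t − w_*‖² − ‖w_{t+1} − w_*‖²)/(2η) + (η/2) ‖∇f(w_t)‖². -/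
/-!
Convexity gives `f w_t - f w_* ≤ ⟪∇f(w_t), w_t - w_*⟫`. Expanding the square of the unprojected
step `w_t - η ∇f(w_t) - w_*` turns `2η` times this inner product into
`‖w_t - w_*‖² - ‖w_t - η ∇f(w_t) - w_*‖² + η² ‖∇f(w_t)‖²`, and projecting onto `Ω` can only bring
the point closer to `w_* ∈ Ω`.
-/

open InnerProductSpace

section FirstOrder

variable {E : Type*} [NormedAddCommGroup E] [NormedSpace ℝ E] {s : Set E} {f : E → ℝ} {x y : E}

theorem ConvexOn.add_fderiv_sub_le {f' : E →L[ℝ] ℝ} (hf : ConvexOn ℝ s f) (hx : x ∈ s)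
    (hy : y ∈ s) (hf' : HasFDerivAt f f' x) : f x + f' (y - x) ≤ f y := by
  set φ : ℝ →ᵃ[ℝ] E := AffineMap.lineMap x y
  have hline : ConvexOn ℝ (φ ⁻¹' s) (f ∘ φ) := hf.comp_affineMap φ
  have hderiv : HasDerivAt (f ∘ φ) (f' (y - x)) 0 :=
    HasFDerivAt.comp_hasDerivAt (x := (0 : ℝ)) (by simpa [φ] using hf')
      AffineMap.hasDerivAt_lineMap
  have hslope := hline.le_slope_of_hasDerivAt (by simpa [φ] using hx) (by simpa [φ] using hy)
    zero_lt_one hderiv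
  simp only [slope_def_field, Function.comp_apply, φ, AffineMap.lineMap_apply_zero,
    AffineMap.lineMap_apply_one, sub_zero, div_one] at hslope
  linarith

end FirstOrder

section InnerProduct

variable {F : Type*} [NormedAddCommGroup F] [InnerProductSpace ℝ F]

theorem ConvexOn.add_inner_gradient_sub_le [CompleteSpace F] {s : Set F} {f : F → ℝ} {g x y : F}
    (hf : ConvexOn ℝ s f) (hx : x ∈ s) (hy : y ∈ s) (hg : HasGradientAt f g x) :
    f x + ⟪g, y - x⟫_ℝ ≤ f y := by
  simpa using hf.add_fderiv_sub_le hx hy (hasGradientAt_iff_hasFDerivAt.mp hg)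

theorem norm_sub_le_of_forall_norm_sub_le {K : Set F} (hK : Convex ℝ K) {u v w : F} (hv : v ∈ K)
    (hmin : ∀ z ∈ K, ‖u - v‖ ≤ ‖u - z‖) (hw : w ∈ K) : ‖v - w‖ ≤ ‖u - w‖ := by
  have : Nonempty K := ⟨⟨v, hv⟩⟩
  have hinf : ‖u - v‖ = ⨅ z : K, ‖u - z‖ :=
    le_antisymm (le_ciInf fun z => hmin z z.2)
      (ciInf_le ⟨0, by rintro _ ⟨z, rfl⟩; positivity⟩ (⟨v, hv⟩ : K))
  have hobtuse : ⟪u - v, w - v⟫_ℝ ≤ 0 :=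
    (norm_eq_iInf_iff_real_inner_le_zero hK hv).mp hinf w hw
  have hexpand : ‖u - w‖ ^ 2 = ‖u - v‖ ^ 2 - 2 * ⟪u - v, w - v⟫_ℝ + ‖v - w‖ ^ 2 := by
    rw [← norm_sub_rev w v, ← norm_sub_sq_real, sub_sub_sub_cancel_right]
  exact le_of_sq_le_sq (by nlinarith [sq_nonneg ‖u - v‖]) (norm_nonneg _)

theorem norm_sub_smul_sub_sq (x g z : F) (η : ℝ) :
    ‖x - η • g - z‖ ^ 2 = ‖x - z‖ ^ 2 - 2 * η * ⟪g, x - z⟫_ℝ + η ^ 2 * ‖g‖ ^ 2 := by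
  rw [sub_right_comm, norm_sub_sq_real, real_inner_smul_right, norm_smul, mul_pow,
    Real.norm_eq_abs, sq_abs, real_inner_comm]
  ring

end InnerProduct

theorem projected_gradient_step_general {d : ℕ} (f : EuclideanSpace ℝ (Fin d) → ℝ)
    (hconv : ConvexOn ℝ Set.univ f) (hdiff : Differentiable ℝ f)
    (Ω : Set (EuclideanSpace ℝ (Fin d)))
    (hΩcv : Convex ℝ Ω)
    (η : ℝ) (hη : 0 < η)
    (wt wstar wt1 : EuclideanSpace ℝ (Fin d)) (hws : wstar ∈ Ω)
    (hmem : wt1 ∈ Ω)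
    (hproj : ∀ u ∈ Ω, ‖wt - η • gradient f wt - wt1‖ ≤ ‖wt - η • gradient f wt - u‖) :
    f wt - f wstar ≤ (‖wt - wstar‖ ^ 2 - ‖wt1 - wstar‖ ^ 2) / (2 * η) +
      η / 2 * ‖gradient f wt‖ ^ 2 := by
  set g := gradient f wt
  have htangent : f wt + ⟪g, wstar - wt⟫_ℝ ≤ f wstar :=
    hconv.add_inner_gradient_sub_le trivial trivial (hdiff wt).hasGradientAt
  have hflip : ⟪g, wstar - wt⟫_ℝ = -⟪g, wt - wstar⟫_ℝ := by
    rw [← inner_neg_right, neg_sub]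
  have hcloser : ‖wt1 - wstar‖ ≤ ‖wt - η • g - wstar‖ :=
    norm_sub_le_of_forall_norm_sub_le hΩcv hmem hproj hws
  have hstep := norm_sub_smul_sub_sq wt g wstar η
  have hscaled : 2 * η * (f wt - f wstar) ≤
      ‖wt - wstar‖ ^ 2 - ‖wt1 - wstar‖ ^ 2 + η ^ 2 * ‖g‖ ^ 2 := by
    nlinarith [pow_le_pow_left₀ (norm_nonneg _) hcloser 2]
  rw [div_add' _ _ _ (by positivity), le_div_iff₀ (by positivity)]
  linarith

/-- one-step projected gradient descent inequality for a convex
differentiable `f`.  The projection `π_Ω` is characterized as the point of `Ω`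
nearest to `w_t − η ∇f(w_t)`. -/
theorem projected_gradient_step {d : ℕ} (f : EuclideanSpace ℝ (Fin d) → ℝ)
    (hconv : ConvexOn ℝ Set.univ f) (hdiff : Differentiable ℝ f)
    (Ω : Set (EuclideanSpace ℝ (Fin d))) (hΩne : Ω.Nonempty)
    (hΩcl : IsClosed Ω) (hΩcv : Convex ℝ Ω)
    (η : ℝ) (hη : 0 < η)
    (wt wstar wt1 : EuclideanSpace ℝ (Fin d)) (hwt : wt ∈ Ω) (hws : wstar ∈ Ω)
    (hmem : wt1 ∈ Ω)
    (hproj : ∀ u ∈ Ω, ‖wt - η • gradient f wt - wt1‖ ≤ ‖wt - η • gradient f wt - u‖) :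
    f wt - f wstar ≤ (‖wt - wstar‖ ^ 2 - ‖wt1 - wstar‖ ^ 2) / (2 * η) +
      η / 2 * ‖gradient f wt‖ ^ 2 :=
  projected_gradient_step_general f hconv hdiff Ω hΩcv η hη wt wstar wt1 hws hmem hproj
end

section
/- Let φ : ℝ → ℝ be a nonnegative convex differentiable loss with γ-Lipschitz derivative, and for a fixed sample (x_t, y_t) with ‖x_t‖ ≤ 1 and y_t ∈ {−1, +1} define ℓ_t(w) = φ(y_t ⟨w, x_t⟩). Let Ω ⊆ ℝ^d be a nonempty closed convex set, η > 0, w_t ∈ Ω, w_* ∈ Ω, and w_{t+1} = π_Ω(w_t − η ∇ℓ_t(w_t)). Then ℓ_t(w_t) − ℓ_t(w_*) ≤ (‖w_t − w_*‖² − ‖w_{t+1} − w_*‖²)/(2η) + 2ηγ ℓ_t(w_t). -/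
/-!
Convexity of `φ` bounds the loss gap by `⟪g, w_t - w_*⟫`, where `g = φ'(z) • y_t x_t` is the
gradient. Projecting onto a convex set does not increase the distance to its points, so expanding
`‖w_t - η g - w_*‖²` gives `2η⟪g, w_t - w_*⟫ ≤ ‖w_t - w_*‖² - ‖w_{t+1} - w_*‖² + η²‖g‖²`.
Finally `‖g‖² ≤ φ'(z)² ≤ 2γ φ(z)`, since a nonnegative function with `γ`-Lipschitz derivative is
self-bounding; this yields the claim even with `ηγ` in place of `2ηγ`.
-/

open RealInnerProductSpace

theorem le_add_deriv_mul_add_half_mul_sq_of_lipschitz_deriv {φ φ' : ℝ → ℝ} {γ : ℝ}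
    (hderiv : ∀ z, HasDerivAt φ (φ' z) z) (hlip : ∀ z z', |φ' z - φ' z'| ≤ γ * |z - z'|)
    (a b : ℝ) : φ b ≤ φ a + φ' a * (b - a) + γ / 2 * (b - a) ^ 2 := by
  set g : ℝ → ℝ := fun t => φ t - φ' a * (t - a) - γ / 2 * (t - a) ^ 2 with hg_def
  have hg : ∀ t, HasDerivAt g (φ' t - φ' a - γ * (t - a)) t := by
    intro t
    have hlin := (hasDerivAt_id' t).sub_const a
    refine (((hderiv t).sub (hlin.const_mul (φ' a))).sub
      ((hlin.pow 2).const_mul (γ / 2))).congr_deriv ?_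
    norm_num
    ring
  have hg_cont : ∀ D, ContinuousOn g D := fun D t _ => (hg t).continuousAt.continuousWithinAt
  have hg_within : ∀ D, ∀ t ∈ interior D, HasDerivWithinAt g _ (interior D) t :=
    fun D t _ => (hg t).hasDerivWithinAt
  suffices g b ≤ g a by simp only [hg_def, sub_self] at this; linarith
  rcases le_total a b with hab | hba
  · refine antitoneOn_of_hasDerivWithinAt_nonpos (convex_Ici a) (hg_cont _) (hg_within _)
      (fun t ht => ?_) Set.self_mem_Ici hab hab
    rw [interior_Ici] at ht
    have := (abs_le.1 ((hlip t a).trans_eq (by rw [abs_of_pos (sub_pos.2 ht)]))).2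
    linarith
  · refine monotoneOn_of_hasDerivWithinAt_nonneg (convex_Iic a) (hg_cont _) (hg_within _)
      (fun t ht => ?_) hba Set.self_mem_Iic hba
    rw [interior_Iic] at ht
    have := (abs_le.1 ((hlip t a).trans_eq (by rw [abs_of_neg (sub_neg.2 ht)]))).1
    linarith

theorem sq_deriv_le_of_nonneg_of_lipschitz_deriv {φ φ' : ℝ → ℝ} {γ : ℝ} (hγ : 0 < γ)
    (hnonneg : ∀ z, 0 ≤ φ z) (hderiv : ∀ z, HasDerivAt φ (φ' z) z)
    (hlip : ∀ z z', |φ' z - φ' z'| ≤ γ * |z - z'|) (z : ℝ) :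
    φ' z ^ 2 ≤ 2 * γ * φ z := by
  -- a gradient step of length `φ' z / γ` lowers `φ` by `φ' z ^ 2 / (2γ)` and stays `≥ 0`
  set c := φ' z / γ
  have hc : φ' z = γ * c := (mul_div_cancel₀ _ hγ.ne').symm
  have h := le_add_deriv_mul_add_half_mul_sq_of_lipschitz_deriv hderiv hlip z (z - c)
  rw [hc, sub_sub_cancel_left] at h
  rw [hc]
  nlinarith [hnonneg (z - c), mul_le_mul_of_nonneg_left h hγ.le]

theorem ConvexOn.add_mul_sub_le_of_hasDerivAt {S : Set ℝ} {f : ℝ → ℝ} {f' a b : ℝ}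
    (hfc : ConvexOn ℝ S f) (ha : a ∈ S) (hb : b ∈ S) (hf : HasDerivAt f f' a) :
    f a + f' * (b - a) ≤ f b := by
  rcases lt_trichotomy a b with hab | rfl | hba
  · have := hfc.le_slope_of_hasDerivAt ha hb hab hf
    rw [slope_def_field, le_div_iff₀ (sub_pos.2 hab)] at this
    linarith
  · simp
  · have := hfc.slope_le_of_hasDerivAt hb ha hba hf
    rw [slope_def_field, div_le_iff₀ (sub_pos.2 hba)] at this
    linarith

section InnerProductSpace

variable {E : Type*} [NormedAddCommGroup E] [InnerProductSpace ℝ E]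

theorem hasGradientAt_comp_inner [CompleteSpace E] {φ φ' : ℝ → ℝ}
    (hderiv : ∀ z, HasDerivAt φ (φ' z) z) (a w : E) :
    HasGradientAt (fun w => φ ⟪w, a⟫) (φ' ⟪w, a⟫ • a) w := by
  have hlin : HasFDerivAt (fun w => ⟪w, a⟫) (InnerProductSpace.toDual ℝ E a) w := by
    convert (InnerProductSpace.toDual ℝ E a).hasFDerivAt using 1
    exact funext fun u => real_inner_comm a u
  rw [hasGradientAt_iff_hasFDerivAt, map_smul]
  exact (hderiv _).comp_hasFDerivAt w hlin

theorem Convex.norm_sub_le_norm_sub_of_isMinOn {K : Set E} (hK : Convex ℝ K) {v p w : E}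
    (hp : p ∈ K) (hmin : IsMinOn (fun u => ‖v - u‖) K p) (hw : w ∈ K) :
    ‖p - w‖ ≤ ‖v - w‖ := by
  have hobtuse : ⟪v - p, w - p⟫ ≤ 0 :=
    (norm_eq_iInf_iff_real_inner_le_zero hK hp).1 (hmin.iInf_eq hp).symm w hw
  have hexpand : ‖v - w‖ ^ 2 = ‖v - p‖ ^ 2 - 2 * ⟪v - p, w - p⟫ + ‖w - p‖ ^ 2 := by
    rw [← norm_sub_sq_real, sub_sub_sub_cancel_right]
  rw [norm_sub_rev p w, ← pow_le_pow_iff_left₀ (norm_nonneg _) (norm_nonneg _) two_ne_zero]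
  nlinarith [sq_nonneg ‖v - p‖]

theorem Convex.two_mul_inner_le_of_isMinOn_projected_step {K : Set E} (hK : Convex ℝ K)
    {w g p w' : E} {η : ℝ} (hp : p ∈ K) (hmin : IsMinOn (fun u => ‖w - η • g - u‖) K p)
    (hw' : w' ∈ K) :
    2 * η * ⟪g, w - w'⟫ ≤ ‖w - w'‖ ^ 2 - ‖p - w'‖ ^ 2 + η ^ 2 * ‖g‖ ^ 2 := by
  have hcloser :=
    pow_le_pow_left₀ (norm_nonneg _) (hK.norm_sub_le_norm_sub_of_isMinOn hp hmin hw') 2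
  have hexpand :
      ‖w - η • g - w'‖ ^ 2 = ‖w - w'‖ ^ 2 - 2 * η * ⟪g, w - w'⟫ + η ^ 2 * ‖g‖ ^ 2 := by
    rw [sub_right_comm, norm_sub_sq_real, real_inner_smul_right, norm_smul, mul_pow,
      Real.norm_eq_abs, sq_abs, real_inner_comm]
    ring
  linarith

end InnerProductSpace

theorem sgd_one_step_smooth_general {d : ℕ} (φ φ' : ℝ → ℝ) (γ : ℝ) (hγ : 0 < γ)
    (hnonneg : ∀ z, 0 ≤ φ z) (hconv : ConvexOn ℝ Set.univ φ)
    (hderiv : ∀ z, HasDerivAt φ (φ' z) z)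
    (hlip : ∀ z z', |φ' z - φ' z'| ≤ γ * |z - z'|)
    (xt : EuclideanSpace ℝ (Fin d)) (yt : ℝ) (hx : ‖xt‖ ≤ 1) (hy : yt = 1 ∨ yt = -1)
    (Ω : Set (EuclideanSpace ℝ (Fin d)))
    (hΩcv : Convex ℝ Ω)
    (η : ℝ) (hη : 0 < η)
    (wt wstar wt1 : EuclideanSpace ℝ (Fin d)) (hws : wstar ∈ Ω)
    (hmem : wt1 ∈ Ω)
    (hproj : ∀ u ∈ Ω,
      ‖wt - η • gradient (fun w => φ (yt * ⟪w, xt⟫)) wt - wt1‖ ≤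
        ‖wt - η • gradient (fun w => φ (yt * ⟪w, xt⟫)) wt - u‖) :
    φ (yt * ⟪wt, xt⟫) - φ (yt * ⟪wstar, xt⟫) ≤
      (‖wt - wstar‖ ^ 2 - ‖wt1 - wstar‖ ^ 2) / (2 * η) +
        2 * η * γ * φ (yt * ⟪wt, xt⟫) := by
  set a := yt • xt
  have ha : ‖a‖ ≤ 1 := by
    rw [norm_smul, Real.norm_eq_abs]
    rcases hy with rfl | rfl <;> simpa using hx
  simp only [← real_inner_smul_right] at hproj ⊢
  rw [(hasGradientAt_comp_inner hderiv a wt).gradient] at hproj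
  set g := φ' ⟪wt, a⟫ • a
  have hstep := hΩcv.two_mul_inner_le_of_isMinOn_projected_step hmem (isMinOn_iff.2 hproj) hws
  have htangent : φ ⟪wt, a⟫ - φ ⟪wstar, a⟫ ≤ ⟪g, wt - wstar⟫ := by
    have := hconv.add_mul_sub_le_of_hasDerivAt (Set.mem_univ _) (Set.mem_univ ⟪wstar, a⟫)
      (hderiv ⟪wt, a⟫)
    rw [real_inner_smul_left, inner_sub_right, real_inner_comm wt, real_inner_comm wstar]
    linarith
  have hgrad : ‖g‖ ^ 2 ≤ 2 * γ * φ ⟪wt, a⟫ := by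
    calc ‖g‖ ^ 2 = φ' ⟪wt, a⟫ ^ 2 * ‖a‖ ^ 2 := by rw [norm_smul, mul_pow, Real.norm_eq_abs, sq_abs]
      _ ≤ φ' ⟪wt, a⟫ ^ 2 := mul_le_of_le_one_right (sq_nonneg _) (pow_le_one₀ (norm_nonneg a) ha)
      _ ≤ 2 * γ * φ ⟪wt, a⟫ := sq_deriv_le_of_nonneg_of_lipschitz_deriv hγ hnonneg hderiv hlip _
  rw [← sub_le_iff_le_add, le_div_iff₀ (by positivity)]
  nlinarith [mul_nonneg (mul_nonneg (sq_nonneg η) hγ.le) (hnonneg ⟪wt, a⟫)]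

/-- one step of projected SGD on the smooth nonnegative convex loss
`ℓ_t(w) = φ(y_t ⟨w, x_t⟩)` satisfies
`ℓ_t(w_t) − ℓ_t(w_*) ≤ (‖w_t − w_*‖² − ‖w_{t+1} − w_*‖²)/(2η) + 2ηγ ℓ_t(w_t)`. -/
theorem sgd_one_step_smooth {d : ℕ} (φ φ' : ℝ → ℝ) (γ : ℝ) (hγ : 0 < γ)
    (hnonneg : ∀ z, 0 ≤ φ z) (hconv : ConvexOn ℝ Set.univ φ)
    (hderiv : ∀ z, HasDerivAt φ (φ' z) z)
    (hlip : ∀ z z', |φ' z - φ' z'| ≤ γ * |z - z'|)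
    (xt : EuclideanSpace ℝ (Fin d)) (yt : ℝ) (hx : ‖xt‖ ≤ 1) (hy : yt = 1 ∨ yt = -1)
    (Ω : Set (EuclideanSpace ℝ (Fin d))) (hΩne : Ω.Nonempty)
    (hΩcl : IsClosed Ω) (hΩcv : Convex ℝ Ω)
    (η : ℝ) (hη : 0 < η)
    (wt wstar wt1 : EuclideanSpace ℝ (Fin d)) (hwt : wt ∈ Ω) (hws : wstar ∈ Ω)
    (hmem : wt1 ∈ Ω)
    (hproj : ∀ u ∈ Ω,
      ‖wt - η • gradient (fun w => φ (yt * ⟪w, xt⟫)) wt - wt1‖ ≤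
        ‖wt - η • gradient (fun w => φ (yt * ⟪w, xt⟫)) wt - u‖) :
    φ (yt * ⟪wt, xt⟫) - φ (yt * ⟪wstar, xt⟫) ≤
      (‖wt - wstar‖ ^ 2 - ‖wt1 - wstar‖ ^ 2) / (2 * η) +
        2 * η * γ * φ (yt * ⟪wt, xt⟫) :=
  sgd_one_step_smooth_general φ φ' γ hγ hnonneg hconv hderiv hlip xt yt hx hy Ω hΩcv η hη wt wstar
    wt1 hws hmem hproj
end

section
/- Let φ : ℝ → ℝ be a nonnegative convex differentiable loss with γ-Lipschitz derivative, let Ω = {w ∈ ℝ^d : ‖w‖ ≤ R}, and for samples (x_t, y_t), t = 1,…,T, with ‖x_t‖ ≤ 1 and y_t ∈ {−1,+1}, set ℓ_t(w) = φ(y_t ⟨w, x_t⟩). Let w_1 = 0 and w_{t+1} = π_Ω(w_t − η ∇ℓ_t(w_t)) with step size 0 < η ≤ 1/(2γ). Then for any w_* ∈ Ω, Σ_{t=1}^T (ℓ_t(w_t) − ℓ_t(w_*)) ≤ R²/(2η) + 2ηγ Σ_{t=1}^T ℓ_t(w_t), and in particular (1 − 2ηγ) Σ_{t=1}^T ℓ_t(w_t)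 − Σ_{t=1}^T ℓ_t(w_*) ≤ R²/(2η). -/
/-!
Projecting onto a convex set does not increase the distance to its points, so one step of
projected gradient descent gives `2η⟪w_t - u, g_t⟫ ≤ ‖w_t - u‖² - ‖w_{t+1} - u‖² + η²‖g_t‖²`.
By convexity the left side dominates `2η (ℓ_t(w_t) - ℓ_t(u))`, and summing telescopes.
The losses are self-bounding: a nonnegative `φ` with `γ`-Lipschitz derivative satisfies
`φ'(z)² ≤ 4γ φ(z)` (evaluate the quadratic upper bound at `z - φ'(z)/(2γ)`), so for
`|y_t| = 1` and `‖x_t‖ ≤ 1` the squared gradient norm is at most `4γ ℓ_t(w_t)`.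
-/

open RealInnerProductSpace Finset

lemma ConvexOn.sub_le_mul_sub_of_hasDerivAt {f : ℝ → ℝ} {f' a b : ℝ}
    (hf : ConvexOn ℝ Set.univ f) (ha : HasDerivAt f f' a) : f a - f b ≤ f' * (a - b) := by
  rcases lt_trichotomy a b with hab | rfl | hba
  · have h := hf.le_slope_of_hasDerivAt (Set.mem_univ a) (Set.mem_univ b) hab ha
    rw [slope_def_field, le_div_iff₀ (sub_pos.2 hab)] at h
    linarith
  · simp
  · have h := hf.slope_le_of_hasDerivAt (Set.mem_univ b) (Set.mem_univ a) hba ha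
    rw [slope_def_field, div_le_iff₀ (sub_pos.2 hba)] at h
    linarith

section LipschitzDeriv

variable {φ φ' : ℝ → ℝ} {γ : ℝ}

lemma abs_sub_sub_mul_sub_le_mul_sq (hderiv : ∀ z, HasDerivAt φ (φ' z) z)
    (hlip : ∀ z z', |φ' z - φ' z'| ≤ γ * |z - z'|) (z u : ℝ) :
    |φ u - φ z - φ' z * (u - z)| ≤ γ * (u - z) ^ 2 := by
  have hγ : 0 ≤ γ := by simpa using (abs_nonneg _).trans (hlip 1 0)
  have hbound : ∀ c ∈ Set.uIcc z u, ‖φ' c - φ' z‖ ≤ γ * |u - z| := fun c hc =>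
    (hlip c z).trans (mul_le_mul_of_nonneg_left (Set.abs_sub_left_of_mem_uIcc hc) hγ)
  have hmvt := Convex.norm_image_sub_le_of_norm_hasDerivWithin_le
    (f := fun s => φ s - φ' z * s)
    (fun c _ => ((hderiv c).sub ((hasDerivAt_id c).const_mul (φ' z))).hasDerivWithinAt
      |>.congr_deriv (by simp)) hbound (convex_uIcc z u) Set.left_mem_uIcc Set.right_mem_uIcc
  rw [Real.norm_eq_abs, Real.norm_eq_abs] at hmvt
  calc |φ u - φ z - φ' z * (u - z)| = |φ u - φ' z * u - (φ z - φ' z * z)| := by ring_nf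
    _ ≤ γ * |u - z| * |u - z| := hmvt
    _ = γ * (u - z) ^ 2 := by rw [mul_assoc, ← sq, sq_abs]

lemma sq_le_four_mul_of_nonneg_of_lipschitz_deriv (hγ : 0 < γ) (hnonneg : ∀ z, 0 ≤ φ z)
    (hderiv : ∀ z, HasDerivAt φ (φ' z) z) (hlip : ∀ z z', |φ' z - φ' z'| ≤ γ * |z - z'|)
    (z : ℝ) : φ' z ^ 2 ≤ 4 * γ * φ z := by
  set δ := φ' z / (2 * γ) with hδ
  have hφ' : φ' z = 2 * γ * δ := by rw [hδ]; field_simp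
  have hdescent := (abs_le.1 (abs_sub_sub_mul_sub_le_mul_sq hderiv hlip z (z - δ))).2
  have hφ_nonneg := hnonneg (z - δ)
  rw [hφ'] at hdescent ⊢
  nlinarith

end LipschitzDeriv

section LinearPredictor

variable {E : Type*} [NormedAddCommGroup E] [InnerProductSpace ℝ E] {φ φ' : ℝ → ℝ}

lemma hasGradientAt_comp_mul_inner [CompleteSpace E] (hderiv : ∀ z, HasDerivAt φ (φ' z) z)
    (c : ℝ) (a v : E) :
    HasGradientAt (fun w => φ (c * ⟪w, a⟫)) ((φ' (c * ⟪v, a⟫) * c) • a) v := by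
  have hlin : HasFDerivAt (fun w : E => c * ⟪w, a⟫) (c • innerSL ℝ a) v :=
    (((innerSL ℝ a).hasFDerivAt).const_mul c).congr_of_eventuallyEq
      (Filter.Eventually.of_forall fun w => by simp [real_inner_comm])
  have hdual : InnerProductSpace.toDual ℝ E ((φ' (c * ⟪v, a⟫) * c) • a) =
      φ' (c * ⟪v, a⟫) • c • innerSL ℝ a := by
    ext u
    simp [mul_assoc]
  rw [hasGradientAt_iff_hasFDerivAt, hdual]
  exact (hderiv (c * ⟪v, a⟫)).comp_hasFDerivAt v hlin

lemma sub_le_inner_of_convexOn_comp_mul_inner (hconv : ConvexOn ℝ Set.univ φ)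
    (hderiv : ∀ z, HasDerivAt φ (φ' z) z) (c : ℝ) (a v u : E) :
    φ (c * ⟪v, a⟫) - φ (c * ⟪u, a⟫) ≤ ⟪v - u, (φ' (c * ⟪v, a⟫) * c) • a⟫ := by
  rw [real_inner_smul_right, inner_sub_left]
  convert hconv.sub_le_mul_sub_of_hasDerivAt (b := c * ⟪u, a⟫) (hderiv _) using 1
  ring

lemma norm_mul_smul_sq_le_sq {c : ℝ} {a : E} (hc : |c| ≤ 1) (ha : ‖a‖ ≤ 1) (s : ℝ) :
    ‖(s * c) • a‖ ^ 2 ≤ s ^ 2 := by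
  have hc2 : |c| ^ 2 ≤ 1 := pow_le_one₀ (abs_nonneg c) hc
  have ha2 : ‖a‖ ^ 2 ≤ 1 := pow_le_one₀ (norm_nonneg a) ha
  rw [norm_smul, Real.norm_eq_abs, abs_mul, mul_pow, mul_pow, sq_abs s]
  calc s ^ 2 * |c| ^ 2 * ‖a‖ ^ 2 ≤ s ^ 2 * 1 * 1 := by gcongr
    _ = s ^ 2 := by ring

end LinearPredictor

section ProjectedGradient

variable {E : Type*} [NormedAddCommGroup E] [InnerProductSpace ℝ E] {K : Set E}

lemma Convex.norm_sub_sq_le_of_isMinOn (hK : Convex ℝ K) {v p u : E} (hp : p ∈ K)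
    (hmin : IsMinOn (fun q => ‖v - q‖) K p) (hu : u ∈ K) : ‖p - u‖ ^ 2 ≤ ‖v - u‖ ^ 2 := by
  have : Nonempty K := ⟨⟨p, hp⟩⟩
  have hinf : ‖v - p‖ = ⨅ q : K, ‖v - q‖ :=
    le_antisymm (le_ciInf fun q => isMinOn_iff.1 hmin q q.2)
      (ciInf_le ⟨0, Set.forall_mem_range.2 fun _ => norm_nonneg _⟩ (⟨p, hp⟩ : K))
  have hobtuse : ⟪v - p, u - p⟫ ≤ 0 := (norm_eq_iInf_iff_real_inner_le_zero hK hp).1 hinf u hu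
  have hsplit : ‖v - u‖ ^ 2 = ‖v - p‖ ^ 2 - 2 * ⟪v - p, u - p⟫ + ‖p - u‖ ^ 2 := by
    rw [show v - u = (v - p) + (p - u) by abel, norm_add_sq_real,
      show p - u = -(u - p) by abel, inner_neg_right, norm_neg]
    ring
  nlinarith [sq_nonneg ‖v - p‖]

lemma Convex.two_mul_inner_le_of_isMinOn (hK : Convex ℝ K) {w g p u : E} {η : ℝ} (hp : p ∈ K)
    (hmin : IsMinOn (fun q => ‖w - η • g - q‖) K p) (hu : u ∈ K) :
    2 * η * ⟪w - u, g⟫ + (‖p - u‖ ^ 2 - ‖w - u‖ ^ 2) ≤ η ^ 2 * ‖g‖ ^ 2 := by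
  have hexpand : ‖w - η • g - u‖ ^ 2 = ‖w - u‖ ^ 2 - 2 * η * ⟪w - u, g⟫ + η ^ 2 * ‖g‖ ^ 2 := by
    rw [show w - η • g - u = (w - u) - η • g by abel, norm_sub_sq_real, real_inner_smul_right,
      norm_smul, mul_pow, Real.norm_eq_abs, sq_abs]
    ring
  linarith [hK.norm_sub_sq_le_of_isMinOn hp hmin hu]

theorem Convex.regret_le_of_isMinOn (hK : Convex ℝ K) {f : ℕ → E → ℝ} {g w : ℕ → E} {η : ℝ}
    (hη : 0 < η) {u : E} (hu : u ∈ K) (hsub : ∀ t, f t (w t) - f t u ≤ ⟪w t - u, g t⟫)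
    (hmem : ∀ t, w (t + 1) ∈ K) (hmin : ∀ t, IsMinOn (fun q => ‖w t - η • g t - q‖) K (w (t + 1)))
    (T : ℕ) :
    ∑ t ∈ Icc 1 T, (f t (w t) - f t u) ≤
      ‖w 1 - u‖ ^ 2 / (2 * η) + η / 2 * ∑ t ∈ Icc 1 T, ‖g t‖ ^ 2 := by
  set D : ℕ → ℝ := fun t => ‖w t - u‖ ^ 2
  have hstep : ∀ t, 2 * η * (f t (w t) - f t u) + (D (t + 1) - D t) ≤ η ^ 2 * ‖g t‖ ^ 2 :=
    fun t => by
      have hconv_step := mul_le_mul_of_nonneg_left (hsub t) (by positivity : 0 ≤ 2 * η)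
      linarith [hK.two_mul_inner_le_of_isMinOn (hmem t) (hmin t) hu]
  have htel : ∑ t ∈ Icc 1 T, (D (t + 1) - D t) = D (T + 1) - D 1 := by
    rw [← Ico_add_one_right_eq_Icc, sum_Ico_sub (f := D) (by omega)]
  have hsum := sum_le_sum fun t (_ : t ∈ Icc 1 T) => hstep t
  rw [sum_add_distrib, htel, ← mul_sum, ← mul_sum] at hsum
  refine le_of_mul_le_mul_left ?_ (by positivity : 0 < 2 * η)
  calc 2 * η * ∑ t ∈ Icc 1 T, (f t (w t) - f t u)
      ≤ D 1 + η ^ 2 * ∑ t ∈ Icc 1 T, ‖g t‖ ^ 2 := by linarith [sq_nonneg ‖w (T + 1) - u‖]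
    _ = 2 * η * (D 1 / (2 * η) + η / 2 * ∑ t ∈ Icc 1 T, ‖g t‖ ^ 2) := by field_simp

end ProjectedGradient

theorem sgd_regret_bound_general {d : ℕ} (φ φ' : ℝ → ℝ) (γ R : ℝ) (hγ : 0 < γ)
    (hnonneg : ∀ z, 0 ≤ φ z) (hconv : ConvexOn ℝ Set.univ φ)
    (hderiv : ∀ z, HasDerivAt φ (φ' z) z)
    (hlip : ∀ z z', |φ' z - φ' z'| ≤ γ * |z - z'|)
    (T : ℕ) (x : ℕ → EuclideanSpace ℝ (Fin d)) (y : ℕ → ℝ)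
    (hx : ∀ t, ‖x t‖ ≤ 1) (hy : ∀ t, y t = 1 ∨ y t = -1)
    (ℓ : ℕ → EuclideanSpace ℝ (Fin d) → ℝ)
    (hℓ : ∀ t w, ℓ t w = φ (y t * ⟪w, x t⟫))
    (η : ℝ) (hη0 : 0 < η)
    (w : ℕ → EuclideanSpace ℝ (Fin d)) (hw1 : w 1 = 0)
    (hmem : ∀ t, ‖w (t + 1)‖ ≤ R)
    (hproj : ∀ t, ∀ u : EuclideanSpace ℝ (Fin d), ‖u‖ ≤ R →
      ‖w t - η • gradient (ℓ t) (w t) - w (t + 1)‖ ≤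
        ‖w t - η • gradient (ℓ t) (w t) - u‖)
    (wstar : EuclideanSpace ℝ (Fin d)) (hws : ‖wstar‖ ≤ R) :
    (∑ t ∈ Icc 1 T, (ℓ t (w t) - ℓ t wstar) ≤
        R ^ 2 / (2 * η) + 2 * η * γ * ∑ t ∈ Icc 1 T, ℓ t (w t)) ∧
    (1 - 2 * η * γ) * (∑ t ∈ Icc 1 T, ℓ t (w t)) - ∑ t ∈ Icc 1 T, ℓ t wstar ≤
        R ^ 2 / (2 * η) := by
  have hℓ_eq : ∀ t, ℓ t = fun v => φ (y t * ⟪v, x t⟫) := fun t => funext (hℓ t)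
  have hgrad : ∀ t, gradient (ℓ t) (w t) = (φ' (y t * ⟪w t, x t⟫) * y t) • x t := fun t => by
    rw [hℓ_eq]; exact (hasGradientAt_comp_mul_inner hderiv _ _ _).gradient
  have hgrad_sq : ∀ t, ‖gradient (ℓ t) (w t)‖ ^ 2 ≤ 4 * γ * ℓ t (w t) := fun t => by
    have hy1 : |y t| ≤ 1 := by rcases hy t with h | h <;> simp [h]
    rw [hgrad, hℓ]
    exact (norm_mul_smul_sq_le_sq hy1 (hx t) _).trans
      (sq_le_four_mul_of_nonneg_of_lipschitz_deriv hγ hnonneg hderiv hlip _)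
  have hregret := (convex_closedBall (0 : EuclideanSpace ℝ (Fin d)) R).regret_le_of_isMinOn
    hη0 (mem_closedBall_zero_iff.2 hws) (f := ℓ) (w := w)
    (fun t => by rw [hgrad, hℓ_eq]; exact sub_le_inner_of_convexOn_comp_mul_inner hconv hderiv ..)
    (fun t => mem_closedBall_zero_iff.2 (hmem t))
    (fun t => isMinOn_iff.2 fun q hq => hproj t q (mem_closedBall_zero_iff.1 hq)) T
  have hfirst : ∑ t ∈ Icc 1 T, (ℓ t (w t) - ℓ t wstar) ≤
      R ^ 2 / (2 * η) + 2 * η * γ * ∑ t ∈ Icc 1 T, ℓ t (w t) := by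
    calc _ ≤ ‖w 1 - wstar‖ ^ 2 / (2 * η) + η / 2 * ∑ t ∈ Icc 1 T, ‖gradient (ℓ t) (w t)‖ ^ 2 :=
          hregret
      _ ≤ R ^ 2 / (2 * η) + η / 2 * ∑ t ∈ Icc 1 T, 4 * γ * ℓ t (w t) := by
          rw [hw1, zero_sub, norm_neg]
          gcongr with t
          exact hgrad_sq t
      _ = R ^ 2 / (2 * η) + 2 * η * γ * ∑ t ∈ Icc 1 T, ℓ t (w t) := by
          rw [← mul_sum]; ring
  refine ⟨hfirst, ?_⟩
  rw [sum_sub_distrib] at hfirst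
  linarith

/-- regret bound for projected SGD on smooth nonnegative convex losses
`ℓ_t(w) = φ(y_t ⟨w, x_t⟩)` over the ball `Ω = {w : ‖w‖ ≤ R}`, with `w_1 = 0` and
step size `0 < η ≤ 1/(2γ)`. -/
theorem sgd_regret_bound {d : ℕ} (φ φ' : ℝ → ℝ) (γ R : ℝ) (hγ : 0 < γ) (hR : 0 < R)
    (hnonneg : ∀ z, 0 ≤ φ z) (hconv : ConvexOn ℝ Set.univ φ)
    (hderiv : ∀ z, HasDerivAt φ (φ' z) z)
    (hlip : ∀ z z', |φ' z - φ' z'| ≤ γ * |z - z'|)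
    (T : ℕ) (x : ℕ → EuclideanSpace ℝ (Fin d)) (y : ℕ → ℝ)
    (hx : ∀ t, ‖x t‖ ≤ 1) (hy : ∀ t, y t = 1 ∨ y t = -1)
    (ℓ : ℕ → EuclideanSpace ℝ (Fin d) → ℝ)
    (hℓ : ∀ t w, ℓ t w = φ (y t * ⟪w, x t⟫))
    (η : ℝ) (hη0 : 0 < η) (hη : η ≤ 1 / (2 * γ))
    (w : ℕ → EuclideanSpace ℝ (Fin d)) (hw1 : w 1 = 0)
    (hmem : ∀ t, ‖w (t + 1)‖ ≤ R)
    (hproj : ∀ t, ∀ u : EuclideanSpace ℝ (Fin d), ‖u‖ ≤ R →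
      ‖w t - η • gradient (ℓ t) (w t) - w (t + 1)‖ ≤
        ‖w t - η • gradient (ℓ t) (w t) - u‖)
    (wstar : EuclideanSpace ℝ (Fin d)) (hws : ‖wstar‖ ≤ R) :
    (∑ t ∈ Icc 1 T, (ℓ t (w t) - ℓ t wstar) ≤
        R ^ 2 / (2 * η) + 2 * η * γ * ∑ t ∈ Icc 1 T, ℓ t (w t)) ∧
    (1 - 2 * η * γ) * (∑ t ∈ Icc 1 T, ℓ t (w t)) - ∑ t ∈ Icc 1 T, ℓ t wstar ≤
        R ^ 2 / (2 * η) :=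
  sgd_regret_bound_general φ φ' γ R hγ hnonneg hconv hderiv hlip T x y hx hy ℓ hℓ η hη0 w hw1 hmem
    hproj wstar hws
end
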